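/- arXiv:2004.00840 — 2 statements merged into one kernel-verified Lean document; each statement's English description precedes it below -/
import Mathlib

section
/- For every prime p and positive integers k₁,...,k_r with (k₁,...,k_r) ≠ (1,...,1), the star-version cyclic sum formula holds asymptotically: for all sufficiently large p, ∑_{l=1}^{r} ∑_{m=1}^{k_l−1} H_p^⋆(m, k_{l+1},...,k_r, k₁,...,k_{l−1}, k_l−m+1) ≡ ∑_{l=1}^{r} H_p^⋆(1, k_{l+1},...,k_r, k₁,...,k_l) (mod p). -/
/-- Star multiple harmonic sum (non-strict inequalities), with lower bound `a`:
`MHSstar p (k₁ :: … :: k_r) a = ∑_{a ≤ n₁ ≤ … ≤ n_r < p} ∏ nᵢ^{-kᵢ}` in `ZMod p`. -/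
def MHSstar (p : ℕ) : List ℕ → ℕ → ZMod p
  | [], _ => 1
  | k :: ks, a => ∑ n ∈ Finset.Ico a p, ((n : ZMod p))⁻¹ ^ k * MHSstar p ks n

/-- `Hstar p [k₁,…,k_r] = ∑_{0 < n₁ ≤ … ≤ n_r < p} ∏ nᵢ^{-kᵢ}` in `ZMod p`. -/
def Hstar (p : ℕ) (ks : List ℕ) : ZMod p := MHSstar p ks 1

/-!
Both sides are compared with the sums `HstarGap`, which carry an extra factor `1/(n_s - n₁)`.
For a rotation `k :: ρ` of the indices, the partial fraction identity
`∑_{m=1}^{k} a^{-m} b^{-(k+1-m)} = (a^{-k} - b^{-k}) / (b - a)` gives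
`∑_{m=1}^{k} H*(m, ρ, k+1-m) = HstarGap(k, ρ, 0) - HstarGap(0, ρ, k)` plus the diagonal
`b = a`, a multiple of the power sum `∑_{0<a<p} a^{-(w+1)}` (`w` the weight), which vanishes
mod `p` for `p > w + 2`. For every rotation `ws`,
`HstarGap(ws, 0) - HstarGap(0, ws) = H*(1, ws) + H*(ws, 1)`, because mod `p`
`∑_{b ≥ y} 1/(b-a) - ∑_{c ≤ a} 1/(y-c) = ∑_{c ≤ a} 1/c + ∑_{b ≥ y} 1/b` (reflect `j ↦ p - j`).
Summed over all rotations the `HstarGap` terms cancel cyclically, and `H*(ws, 1)` is the term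
`m = k`.
-/

open Finset

lemma sum_Icc_inv_pow_mul_inv_pow_mul_sub {K : Type*} [Field K] {x y : K} (hx : x ≠ 0)
    (hy : y ≠ 0) (k : ℕ) :
    (∑ m ∈ Icc 1 k, x⁻¹ ^ m * y⁻¹ ^ (k + 1 - m)) * (y - x) = x⁻¹ ^ k - y⁻¹ ^ k := by
  have hshift : ∑ m ∈ Icc 1 k, x⁻¹ ^ m * y⁻¹ ^ (k + 1 - m)
      = x⁻¹ * y⁻¹ * ∑ i ∈ range k, x⁻¹ ^ i * y⁻¹ ^ (k - 1 - i) := by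
    rw [← Ico_add_one_right_eq_Icc, sum_Ico_eq_sum_range, add_tsub_cancel_right, mul_sum]
    refine sum_congr rfl fun i hi => ?_
    rw [mem_range] at hi
    rw [show k + 1 - (1 + i) = k - 1 - i + 1 by omega, pow_add, pow_add]
    ring
  rw [hshift, ← geom_sum₂_mul]
  field_simp

namespace ZMod

lemma natCast_ne_zero_of_pos_of_lt {p a : ℕ} (h1 : 0 < a) (h2 : a < p) : (a : ZMod p) ≠ 0 :=
  (natCast_eq_zero_iff a p).not.2 (Nat.not_dvd_of_pos_of_lt h1 h2)

variable {p : ℕ} [Fact p.Prime]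

lemma sum_Ico_one_inv_pow_eq_zero {n : ℕ} (hn0 : 0 < n) (hn : n < p - 1) :
    ∑ a ∈ Ico 1 p, (a : ZMod p)⁻¹ ^ n = 0 := by
  have hrange : ∑ a ∈ range p, (a : ZMod p)⁻¹ ^ n = ∑ x : ZMod p, x⁻¹ ^ n :=
    sum_nbij' (fun a => (a : ZMod p)) ZMod.val (fun _ _ => mem_univ _)
      (fun x _ => mem_range.2 (ZMod.val_lt x)) (fun _ ha => ZMod.val_cast_of_lt (mem_range.1 ha))
      (fun x _ => ZMod.natCast_zmod_val x) (fun _ _ => rfl)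
  have hinv : ∑ x : ZMod p, x⁻¹ ^ n = ∑ x : ZMod p, x ^ n :=
    Fintype.sum_bijective _ inv_involutive.bijective _ _ fun _ => rfl
  rwa [range_eq_Ico, sum_eq_sum_Ico_succ_bot (Fact.out : p.Prime).pos, Nat.cast_zero, inv_zero,
    zero_pow hn0.ne', zero_add, hinv,
    FiniteField.sum_pow_lt_card_sub_one _ _ (by rwa [ZMod.card])] at hrange

lemma sum_Icc_inv_pow_mul_inv_pow {a b : ℕ} (k : ℕ) (ha : 1 ≤ a) (hab : a ≤ b) (hb : b < p) :
    ∑ m ∈ Icc 1 k, (a : ZMod p)⁻¹ ^ m * (b : ZMod p)⁻¹ ^ (k + 1 - m)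
      = ((a : ZMod p)⁻¹ ^ k - (b : ZMod p)⁻¹ ^ k) * ((b : ZMod p) - a)⁻¹
        + if b = a then k * (a : ZMod p)⁻¹ ^ (k + 1) else 0 := by
  split_ifs with hba
  · subst hba
    rw [sub_self, sub_self, zero_mul, zero_add,
      sum_congr rfl fun m hm => (pow_add _ _ _).symm.trans (by rw [show m + (k + 1 - m) = k + 1 by
        simp only [mem_Icc] at hm; omega]),
      sum_const, Nat.card_Icc, nsmul_eq_mul, add_tsub_cancel_right]
  · have hne : (b : ZMod p) - a ≠ 0 := by
      rw [← Nat.cast_sub hab]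
      exact natCast_ne_zero_of_pos_of_lt (by omega) (by omega)
    rw [add_zero, ← sum_Icc_inv_pow_mul_inv_pow_mul_sub (natCast_ne_zero_of_pos_of_lt ha (by omega))
      (natCast_ne_zero_of_pos_of_lt (by omega) hb), mul_inv_cancel_right₀ hne]

lemma sum_Ico_sum_Icc_inv_pow_mul_inv_pow {a y : ℕ} (k : ℕ) (ha : 1 ≤ a) (hay : a ≤ y)
    (hy : y < p) :
    ∑ b ∈ Ico y p, ∑ m ∈ Icc 1 k, (a : ZMod p)⁻¹ ^ m * (b : ZMod p)⁻¹ ^ (k + 1 - m)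
      = (a : ZMod p)⁻¹ ^ k * ∑ b ∈ Ico y p, ((b : ZMod p) - a)⁻¹
        - ∑ b ∈ Ico y p, (b : ZMod p)⁻¹ ^ k * ((b : ZMod p) - a)⁻¹
        + if y = a then k * (a : ZMod p)⁻¹ ^ (k + 1) else 0 := by
  have hdiag : (if y = a then k * (a : ZMod p)⁻¹ ^ (k + 1) else 0)
      = ∑ b ∈ Ico y p, if b = a then k * (a : ZMod p)⁻¹ ^ (k + 1) else 0 := by
    rw [sum_ite_eq']
    exact if_congr (by simp only [mem_Ico]; omega) rfl rfl
  rw [hdiag, mul_sum, ← sum_sub_distrib, ← sum_add_distrib]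
  refine sum_congr rfl fun b hb => ?_
  rw [sum_Icc_inv_pow_mul_inv_pow k ha (hay.trans (mem_Ico.1 hb).1) (mem_Ico.1 hb).2]
  ring

lemma sum_Ico_inv_sub_sub_sum_Icc_inv_sub {a y : ℕ} (ha : 1 ≤ a) (hay : a ≤ y) (hy : y < p) :
    ∑ b ∈ Ico y p, ((b : ZMod p) - a)⁻¹ - ∑ c ∈ Icc 1 a, ((y : ZMod p) - c)⁻¹
      = ∑ c ∈ Icc 1 a, (c : ZMod p)⁻¹ + ∑ b ∈ Ico y p, (b : ZMod p)⁻¹ := by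
  set S : ℕ → ZMod p := fun n => ∑ j ∈ range n, (j : ZMod p)⁻¹
  have hS {m n : ℕ} (h : m ≤ n) : ∑ j ∈ Ico m n, (j : ZMod p)⁻¹ = S n - S m :=
    sum_Ico_eq_sub _ h
  have hreflect {n : ℕ} (han : a ≤ n) :
      ∑ c ∈ Icc 1 a, ((n - c : ℕ) : ZMod p)⁻¹ = S n - S (n - a) := by
    rw [← Ico_add_one_right_eq_Icc, sum_Ico_reflect (fun j : ℕ => (j : ZMod p)⁻¹) 1 (by omega),
      ← hS (by omega)]
    congr 2; omega
  have h1 : ∑ b ∈ Ico y p, ((b : ZMod p) - a)⁻¹ = S (p - a) - S (y - a) := by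
    have hshift := sum_Ico_add' (fun b : ℕ => ((b : ZMod p) - a)⁻¹) (y - a) (p - a) a
    rw [Nat.sub_add_cancel hay, Nat.sub_add_cancel (by omega)] at hshift
    rw [← hshift, ← hS (by omega)]
    simp
  have h2 : ∑ c ∈ Icc 1 a, ((y : ZMod p) - c)⁻¹ = S y - S (y - a) := by
    rw [← hreflect hay]
    refine sum_congr rfl fun c hc => ?_
    rw [Nat.cast_sub (by simp only [mem_Icc] at hc; omega)]
  have h3 : S p - S (p - a) = - ∑ c ∈ Icc 1 a, (c : ZMod p)⁻¹ := by
    rw [← hreflect (by omega), ← sum_neg_distrib]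
    refine sum_congr rfl fun c hc => ?_
    rw [Nat.cast_sub (by simp only [mem_Icc] at hc; omega), ZMod.natCast_self, zero_sub, inv_neg]
  rw [h1, h2, hS hy.le]
  linear_combination -h3

end ZMod

namespace Hstar

variable {p : ℕ}

/-- `chainSum p ws m h = ∑_{m ≤ n₁ ≤ … ≤ n_s < p} n₁^{-w₁} ⋯ n_s^{-w_s} · h n_s`, where `h` is
evaluated at `m` when `ws = []`. -/
def chainSum (p : ℕ) : List ℕ → ℕ → (ℕ → ZMod p) →ₗ[ZMod p] ZMod p
  | [], m => LinearMap.proj m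
  | w :: ws, m => ∑ n ∈ Ico m p, ((n : ZMod p)⁻¹ ^ w) • chainSum p ws n

@[simp]
lemma chainSum_nil (m : ℕ) (h : ℕ → ZMod p) : chainSum p [] m h = h m := rfl

lemma chainSum_cons (w : ℕ) (ws : List ℕ) (m : ℕ) (h : ℕ → ZMod p) :
    chainSum p (w :: ws) m h = ∑ n ∈ Ico m p, (n : ZMod p)⁻¹ ^ w * chainSum p ws n h := by
  simp [chainSum, LinearMap.sum_apply]

lemma MHSstar_eq_chainSum : ∀ (ks : List ℕ) (a : ℕ), MHSstar p ks a = chainSum p ks a 1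
  | [], _ => rfl
  | k :: ks, a => by
    simp only [MHSstar, chainSum_cons, MHSstar_eq_chainSum ks]

lemma chainSum_congr {ws : List ℕ} {m : ℕ} {h₁ h₂ : ℕ → ZMod p} (hm : m < p)
    (h : ∀ y ∈ Ico m p, h₁ y = h₂ y) : chainSum p ws m h₁ = chainSum p ws m h₂ := by
  induction ws generalizing m with
  | nil => exact h m (mem_Ico.2 ⟨le_rfl, hm⟩)
  | cons w ws ih =>
    simp only [chainSum_cons]
    refine sum_congr rfl fun n hn => ?_
    rw [mem_Ico] at hn
    rw [ih hn.2 fun y hy => h y (mem_Ico.2 ⟨hn.1.trans (mem_Ico.1 hy).1, (mem_Ico.1 hy).2⟩)]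

lemma chainSum_append_singleton (v : ℕ) :
    ∀ (ws : List ℕ) (m : ℕ) (h : ℕ → ZMod p),
      chainSum p (ws ++ [v]) m h
        = chainSum p ws m (fun y => ∑ b ∈ Ico y p, (b : ZMod p)⁻¹ ^ v * h b)
  | [], m, h => chainSum_cons v [] m h
  | w :: ws, m, h => by
    simp only [List.cons_append, chainSum_cons, chainSum_append_singleton v ws]

lemma chainSum_ite_eq_of_lt (c : ZMod p) {a m : ℕ} (ham : a < m) :
    ∀ ws : List ℕ, chainSum p ws m (fun y => if y = a then c else 0) = 0
  | [] => by simp [ham.ne']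
  | w :: ws => by
    simp only [chainSum_cons]
    exact sum_eq_zero fun n hn =>
      by rw [chainSum_ite_eq_of_lt c (ham.trans_le (mem_Ico.1 hn).1), mul_zero]

lemma chainSum_ite_eq (c : ZMod p) {a : ℕ} (ha : a < p) :
    ∀ ws : List ℕ, chainSum p ws a (fun y => if y = a then c else 0) = (a : ZMod p)⁻¹ ^ ws.sum * c
  | [] => by simp
  | w :: ws => by
    rw [chainSum_cons, sum_eq_single_of_mem a (mem_Ico.2 ⟨le_rfl, ha⟩) fun n hn hna => by
      rw [chainSum_ite_eq_of_lt c (lt_of_le_of_ne (mem_Ico.1 hn).1 (Ne.symm hna)), mul_zero]]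
    rw [chainSum_ite_eq c ha ws, List.sum_cons, pow_add, mul_assoc]

lemma sum_mul_chainSum_cons (w : ℕ) (ws : List ℕ) (f : ℕ → ZMod p) (g : ℕ → ℕ → ZMod p) :
    ∑ a ∈ Ico 1 p, f a * chainSum p (w :: ws) a (g a)
      = ∑ n ∈ Ico 1 p,
          chainSum p ws n ((n : ZMod p)⁻¹ ^ w • ∑ c ∈ Icc 1 n, f c • g c) := by
  simp only [chainSum_cons, mul_sum]
  rw [sum_comm' (t' := Ico 1 p) (s' := fun n => Icc 1 n)
    (fun a n => by simp only [mem_Ico, mem_Icc]; omega)]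
  refine sum_congr rfl fun n _ => ?_
  simp only [map_smul, map_sum, smul_eq_mul, mul_sum]
  exact sum_congr rfl fun c _ => by ring


/-- `HstarGap p [w₁, …, w_s] = ∑_{0 < n₁ ≤ … ≤ n_s < p} n₁^{-w₁} ⋯ n_s^{-w_s} / (n_s - n₁)`,
the terms with `n_s = n₁` contributing `0` (as `0⁻¹ = 0`). -/
def HstarGap (p : ℕ) : List ℕ → ZMod p
  | [] => 0
  | w :: ws => ∑ a ∈ Ico 1 p, (a : ZMod p)⁻¹ ^ w * chainSum p ws a (fun b => ((b : ZMod p) - a)⁻¹)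

lemma Hstar_cons (u : ℕ) (ws : List ℕ) :
    Hstar p (u :: ws) = ∑ a ∈ Ico 1 p, (a : ZMod p)⁻¹ ^ u * chainSum p ws a 1 := by
  simp only [Hstar, MHSstar, MHSstar_eq_chainSum]

lemma Hstar_cons_append_singleton (u v : ℕ) (ws : List ℕ) :
    Hstar p (u :: (ws ++ [v])) = ∑ a ∈ Ico 1 p,
      (a : ZMod p)⁻¹ ^ u * chainSum p ws a (fun y => ∑ b ∈ Ico y p, (b : ZMod p)⁻¹ ^ v) := by
  simp only [Hstar_cons, chainSum_append_singleton, Pi.one_apply, mul_one]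

lemma HstarGap_cons_append_singleton (u v : ℕ) (ws : List ℕ) :
    HstarGap p (u :: (ws ++ [v])) = ∑ a ∈ Ico 1 p, (a : ZMod p)⁻¹ ^ u *
      chainSum p ws a (fun y => ∑ b ∈ Ico y p, (b : ZMod p)⁻¹ ^ v * ((b : ZMod p) - a)⁻¹) := by
  simp only [HstarGap, chainSum_append_singleton]

variable [Fact p.Prime]

lemma sum_Icc_Hstar_eq (k : ℕ) (ws : List ℕ) :
    ∑ m ∈ Icc 1 k, Hstar p (m :: (ws ++ [k + 1 - m]))
      = HstarGap p (k :: (ws ++ [0])) - HstarGap p (0 :: (ws ++ [k]))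
        + k * ∑ a ∈ Ico 1 p, (a : ZMod p)⁻¹ ^ (ws.sum + (k + 1)) := by
  simp only [Hstar_cons_append_singleton, HstarGap_cons_append_singleton, mul_sum]
  rw [sum_comm, ← sum_sub_distrib, ← sum_add_distrib]
  refine sum_congr rfl fun a ha => ?_
  obtain ⟨ha1, hap⟩ := mem_Ico.1 ha
  have key : chainSum p ws a
        (∑ m ∈ Icc 1 k, (a : ZMod p)⁻¹ ^ m • fun y => ∑ b ∈ Ico y p, (b : ZMod p)⁻¹ ^ (k + 1 - m))
      = chainSum p ws a
        ((a : ZMod p)⁻¹ ^ k • (fun y => ∑ b ∈ Ico y p, (b : ZMod p)⁻¹ ^ 0 * ((b : ZMod p) - a)⁻¹)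
          - (a : ZMod p)⁻¹ ^ 0 • (fun y => ∑ b ∈ Ico y p, (b : ZMod p)⁻¹ ^ k * ((b : ZMod p) - a)⁻¹)
          + fun y => if y = a then k * (a : ZMod p)⁻¹ ^ (k + 1) else 0) :=
    chainSum_congr hap fun y hy => by
      simp only [Finset.sum_apply, Pi.add_apply, Pi.sub_apply, Pi.smul_apply, smul_eq_mul,
        pow_zero, one_mul]
      rw [← ZMod.sum_Ico_sum_Icc_inv_pow_mul_inv_pow k ha1 (mem_Ico.1 hy).1 (mem_Ico.1 hy).2,
        sum_comm]
      simp only [mul_sum]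
  simp only [map_sum, map_add, map_sub, map_smul, smul_eq_mul, chainSum_ite_eq _ hap] at key
  rw [key, pow_add]
  simp only [pow_zero, one_mul]
  ring

lemma HstarGap_append_zero_sub_HstarGap_zero_cons {ws : List ℕ} (hws : ws ≠ []) :
    HstarGap p (ws ++ [0]) - HstarGap p (0 :: ws) = Hstar p (1 :: ws) + Hstar p (ws ++ [1]) := by
  obtain ⟨w, mid, rfl⟩ := List.exists_cons_of_ne_nil hws
  simp only [List.cons_append]
  rw [HstarGap_cons_append_singleton, Hstar_cons_append_singleton, HstarGap, Hstar_cons,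
    sum_mul_chainSum_cons, sum_mul_chainSum_cons, ← sum_sub_distrib, ← sum_add_distrib]
  refine sum_congr rfl fun a ha => ?_
  obtain ⟨ha1, hap⟩ := mem_Ico.1 ha
  have key : chainSum p mid a ((a : ZMod p)⁻¹ ^ w •
        ((fun y => ∑ b ∈ Ico y p, (b : ZMod p)⁻¹ ^ 0 * ((b : ZMod p) - a)⁻¹)
          - ∑ c ∈ Icc 1 a, (c : ZMod p)⁻¹ ^ 0 • fun y : ℕ => ((y : ZMod p) - c)⁻¹))
      = chainSum p mid a ((a : ZMod p)⁻¹ ^ w • ((∑ c ∈ Icc 1 a, (c : ZMod p)⁻¹ ^ 1 • 1)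
          + fun y => ∑ b ∈ Ico y p, (b : ZMod p)⁻¹ ^ 1)) :=
    chainSum_congr hap fun y hy => by
      simp only [Finset.sum_apply, Pi.add_apply, Pi.sub_apply, Pi.smul_apply, Pi.one_apply,
        smul_eq_mul, pow_zero, pow_one, one_mul, mul_one]
      rw [ZMod.sum_Ico_inv_sub_sub_sum_Icc_inv_sub ha1 (mem_Ico.1 hy).1 (mem_Ico.1 hy).2]
  simp only [map_smul, map_sub, map_add, map_sum, smul_eq_mul] at key ⊢
  linear_combination key

lemma sum_Icc_Hstar_add_Hstar {k : ℕ} (hk : 1 ≤ k) (ws : List ℕ) (hp : ws.sum + k + 2 < p) :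
    ∑ m ∈ Icc 1 (k - 1), Hstar p (m :: (ws ++ [k - m + 1])) + Hstar p (k :: (ws ++ [1]))
      = HstarGap p (k :: (ws ++ [0])) - HstarGap p (0 :: (ws ++ [k])) := by
  have hsplit : ∑ m ∈ Icc 1 (k - 1), Hstar p (m :: (ws ++ [k - m + 1])) + Hstar p (k :: (ws ++ [1]))
      = ∑ m ∈ Icc 1 k, Hstar p (m :: (ws ++ [k + 1 - m])) := by
    obtain ⟨j, rfl⟩ := Nat.exists_eq_add_of_le' hk
    rw [sum_Icc_succ_top (by omega), add_tsub_cancel_right, add_tsub_cancel_left]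
    congr 1
    exact sum_congr rfl fun m hm => by rw [show j + 1 - m + 1 = j + 1 + 1 - m by
      simp only [mem_Icc] at hm; omega]
  rw [hsplit, sum_Icc_Hstar_eq, ZMod.sum_Ico_one_inv_pow_eq_zero (by omega) (by omega), mul_zero,
    add_zero]

end Hstar

lemma List.exists_rotate_eq_getD_cons {α : Type*} {ks : List α} {l : ℕ} (hl : l < ks.length)
    (d : α) :
    ∃ rest, ks.rotate l = ks.getD l d :: rest ∧ ks.rotate (l + 1) = rest ++ [ks.getD l d] := by
  obtain ⟨x, rest, h⟩ := List.exists_cons_of_ne_nil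
    (List.rotate_eq_nil_iff.not.2 (List.ne_nil_of_length_pos (by omega)) : ks.rotate l ≠ [])
  have hx : ks.getD l d = x := by
    rw [List.getD_eq_getElem?_getD, ← List.head?_rotate hl, h]
    rfl
  exact ⟨rest, by rw [h, hx], by rw [← List.rotate_rotate, h, List.rotate_cons_succ,
    List.rotate_zero, hx]⟩

lemma Finset.sum_range_rotate_succ {α M : Type*} [AddCommMonoid M] (f : List α → M) (ks : List α) :
    ∑ l ∈ range ks.length, f (ks.rotate (l + 1)) = ∑ l ∈ range ks.length, f (ks.rotate l) := by
  cases hn : ks.length with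
  | zero => rfl
  | succ n => rw [sum_range_succ, sum_range_succ', ← hn, List.rotate_length, List.rotate_zero]

open Hstar in
theorem cyclic_sum_formula_star_general
    (ks : List ℕ) (hpos : ∀ k ∈ ks, 1 ≤ k) :
    ∃ N : ℕ, ∀ p : ℕ, p.Prime → N < p →
      ∑ l ∈ Finset.range ks.length, ∑ m ∈ Finset.Icc 1 (ks.getD l 1 - 1),
          Hstar p (m :: ((ks.rotate (l + 1)).dropLast ++ [ks.getD l 1 - m + 1]))
        = ∑ l ∈ Finset.range ks.length, Hstar p (1 :: ks.rotate (l + 1)) := by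
  refine ⟨ks.sum + 2, fun p hp hpN => ?_⟩
  have : Fact p.Prime := ⟨hp⟩
  have hstep : ∀ l ∈ range ks.length,
      ∑ m ∈ Icc 1 (ks.getD l 1 - 1),
          Hstar p (m :: ((ks.rotate (l + 1)).dropLast ++ [ks.getD l 1 - m + 1]))
        + Hstar p (ks.rotate l ++ [1])
      = HstarGap p (ks.rotate l ++ [0]) - HstarGap p (0 :: ks.rotate (l + 1)) := by
    intro l hl
    rw [mem_range] at hl
    obtain ⟨mid, hrot, hrot_succ⟩ := List.exists_rotate_eq_getD_cons hl 1
    have hk : 1 ≤ ks.getD l 1 := hpos _ (List.getD_eq_getElem _ _ hl ▸ List.getElem_mem hl)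
    have hsum : mid.sum + ks.getD l 1 = ks.sum := by
      rw [← (List.rotate_perm ks l).sum_eq, hrot, List.sum_cons, add_comm]
    rw [hrot_succ, List.dropLast_concat, hrot]
    exact sum_Icc_Hstar_add_Hstar hk mid (by omega)
  have hcycle : ∀ l ∈ range ks.length,
      HstarGap p (ks.rotate (l + 1) ++ [0]) - HstarGap p (0 :: ks.rotate (l + 1))
        = Hstar p (1 :: ks.rotate (l + 1)) + Hstar p (ks.rotate (l + 1) ++ [1]) := fun l hl =>
    HstarGap_append_zero_sub_HstarGap_zero_cons
      (List.rotate_eq_nil_iff.not.2 <|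
        List.ne_nil_of_length_pos (Nat.zero_lt_of_lt (mem_range.1 hl)))
  apply add_right_cancel (b := ∑ l ∈ range ks.length, Hstar p (ks.rotate l ++ [1]))
  rw [← sum_add_distrib, sum_congr rfl hstep, sum_sub_distrib,
    ← sum_range_rotate_succ (fun ws => HstarGap p (ws ++ [0])), ← sum_sub_distrib,
    sum_congr rfl hcycle, sum_add_distrib, sum_range_rotate_succ (fun ws => Hstar p (ws ++ [1]))]

theorem cyclic_sum_formula_star
    (ks : List ℕ) (hne : ks ≠ []) (hpos : ∀ k ∈ ks, 1 ≤ k)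
    (hnotall1 : ¬ ∀ k ∈ ks, k = 1) :
    ∃ N : ℕ, ∀ p : ℕ, p.Prime → N < p →
      ∑ l ∈ Finset.range ks.length, ∑ m ∈ Finset.Icc 1 (ks.getD l 1 - 1),
          Hstar p (m :: ((ks.rotate (l + 1)).dropLast ++ [ks.getD l 1 - m + 1]))
        = ∑ l ∈ Finset.range ks.length, Hstar p (1 :: ks.rotate (l + 1)) :=
  cyclic_sum_formula_star_general ks hpos
end

section
/- Define the depth-2, two-block cyclic multiple harmonic sum H_p^{cyc}([(a,b),(c)]) := ∑ 1/(n₁^a n₂^b n₃^c) over triples (n₁,n₂,n₃) with 0 < n₁ < n₂ < p, 0 < n₃ < p, n₁ ≤ n₃, and n₃ ≤ n₂ (inverses in Z/pZ). Then for all sufficiently large primes p: 2·H_p^{cyc}([(1,3),(3)]) + 2·H_p^{cyc}([(1,4),(2)]) + 2·H_p^{cyc}([(2,3),(2)]) + H_p^{cyc}([(1,1,3),(2)]) − H_p^{cyc}([(1,2,2),(2)]) ≡ 0 (mod p), where H_p^{cyc}([(k₁,k₂,k₃),(c)]) is the analogous sum over 0 < n₁ < n₂ < n₃ < p, 0 <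 n₄ < p with n₁ ≤ n₄ and n₄ ≤ n₃. -/
/-- Cyclic multiple harmonic sum for the multi-index `[(a,b),(c)]`:
sum of `n₁⁻ᵃ n₂⁻ᵇ n₃⁻ᶜ` over `0 < n₁ < n₂ < p`, `0 < n₃ < p`, `n₁ ≤ n₃`, `n₃ ≤ n₂`. -/
def Hcyc2 (p a b c : ℕ) : ZMod p :=
  ∑ n₁ ∈ Finset.Ioo 0 p, ∑ n₂ ∈ Finset.Ioo n₁ p, ∑ n₃ ∈ Finset.Icc n₁ n₂,
    ((n₁ : ZMod p))⁻¹ ^ a * ((n₂ : ZMod p))⁻¹ ^ b * ((n₃ : ZMod p))⁻¹ ^ c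

/-- Cyclic multiple harmonic sum for the multi-index `[(k₁,k₂,k₃),(c)]`:
sum of `n₁⁻ᵏ¹ n₂⁻ᵏ² n₃⁻ᵏ³ n₄⁻ᶜ` over `0 < n₁ < n₂ < n₃ < p`, `0 < n₄ < p`,
`n₁ ≤ n₄`, `n₄ ≤ n₃`. -/
def Hcyc3 (p k₁ k₂ k₃ c : ℕ) : ZMod p :=
  ∑ n₁ ∈ Finset.Ioo 0 p, ∑ n₂ ∈ Finset.Ioo n₁ p, ∑ n₃ ∈ Finset.Ioo n₂ p,
    ∑ n₄ ∈ Finset.Icc n₁ n₃,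
      ((n₁ : ZMod p))⁻¹ ^ k₁ * ((n₂ : ZMod p))⁻¹ ^ k₂ * ((n₃ : ZMod p))⁻¹ ^ k₃
        * ((n₄ : ZMod p))⁻¹ ^ c

/-!
Splitting the condition `n₁ ≤ n₃ ≤ n₂` (resp. `n₁ ≤ n₄ ≤ n₃`) according to whether the last-block
variable hits an endpoint or lies strictly between two chain variables writes each cyclic sum as a
sum of strict multiple harmonic sums `H(k₁, …, k_r) = ∑_{0 < n₁ < ⋯ < n_r < p} n₁^{-k₁} ⋯ n_r^{-k_r}`,
all of weight 7. Three families of relations mod `p` then suffice: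
* `H(k) = 0` for `0 < k < p - 1`, which turns the stuffle expansion of `H(k) · H(ks)` into a relation;
* reversal `H(ks) = (-1)^{wt} H(ks.reverse)`, from `n ↦ p - n`;
* `H(ks, 1) + ∑ H(ks with one entry k split as (k - i, i + 1)) + H(1, ks) = 0`. Reflecting the top
  variable turns `n_r⁻¹` into the gap `(n_r - n_{r-1})⁻¹`; partial fractions
  `x^{-k} (y - x)⁻¹ = ∑_{i<k} y^{-(i+1)} x^{-(k-i)} + y^{-k} (y - x)⁻¹` followed by the reflection
  `n_{j-1} ↦ n_{j-2} + n_j - n_{j-1}` move the gap one step down, producing the split terms, until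
  it becomes `n₁⁻¹`.
Five stuffle, fourteen reversal and two relations of the last kind combine to the claim.
-/

namespace Finset

variable {M : Type*} [AddCommMonoid M]

theorem sum_Ioo_sum_Ioo_comm (a b : ℕ) (f : ℕ → ℕ → M) :
    ∑ x ∈ Ioo a b, ∑ y ∈ Ioo x b, f x y = ∑ y ∈ Ioo a b, ∑ x ∈ Ioo a y, f x y :=
  sum_comm' fun x y => by simp only [mem_Ioo]; omega

theorem sum_Ioo_reflect (f : ℕ → M) {a b c : ℕ} (h : b ≤ c) :
    ∑ n ∈ Ioo a b, f (c - n) = ∑ n ∈ Ioo (c - b) (c - a), f n := by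
  refine sum_nbij' (c - ·) (c - ·) ?_ ?_ ?_ ?_ fun n _ => rfl <;>
    intro n hn <;> simp only [mem_Ioo] at hn ⊢ <;> omega

theorem sum_Ioo_eq_add_add (f : ℕ → M) {a m b : ℕ} (ham : a < m) (hmb : m < b) :
    ∑ n ∈ Ioo a b, f n = ∑ n ∈ Ioo a m, f n + f m + ∑ n ∈ Ioo m b, f n := by
  have e : Ioo a b = Ioo a m ∪ insert m (Ioo m b) := by
    ext; simp only [mem_union, mem_insert, mem_Ioo]; omega
  rw [e, sum_union (disjoint_left.2 fun x hx => by simp only [mem_insert, mem_Ioo] at hx ⊢; omega),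
    sum_insert (by simp), add_assoc]

theorem sum_Icc_eq_add_add (f : ℕ → M) {a b : ℕ} (hab : a < b) :
    ∑ n ∈ Icc a b, f n = f a + ∑ n ∈ Ioo a b, f n + f b := by
  rw [Icc_eq_cons_Ioc hab.le, sum_cons, Ioc_eq_cons_Ioo hab, sum_cons]
  abel

theorem sum_list_sum_map_comm {ι α : Type*} (s : Finset ι) (L : List α) (f : ι → α → M) :
    ∑ i ∈ s, (L.map (f i)).sum = (L.map fun a => ∑ i ∈ s, f i a).sum := by
  induction L with
  | nil => simp
  | cons a L ih => simp [sum_add_distrib, ih]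

theorem sum_Ioo_sum_Ioo_sum_Icc (a b : ℕ) (g : ℕ → ℕ → ℕ → M) :
    ∑ x ∈ Ioo a b, ∑ y ∈ Ioo x b, ∑ z ∈ Icc a y, g x y z
      = ∑ x ∈ Ioo a b, ∑ y ∈ Ioo x b, (g x y a + g x y x + g x y y)
        + ∑ z ∈ Ioo a b, ∑ x ∈ Ioo z b, ∑ y ∈ Ioo x b, g x y z
        + ∑ x ∈ Ioo a b, ∑ z ∈ Ioo x b, ∑ y ∈ Ioo z b, g x y z := by
  have split : ∀ x ∈ Ioo a b, ∀ y ∈ Ioo x b, ∑ z ∈ Icc a y, g x y z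
      = (g x y a + g x y x + g x y y) + ∑ z ∈ Ioo a x, g x y z + ∑ z ∈ Ioo x y, g x y z := by
    intro x hx y hy
    rw [mem_Ioo] at hx hy
    rw [sum_Icc_eq_add_add _ (by omega), sum_Ioo_eq_add_add _ hx.1 hy.1]
    abel
  rw [sum_congr rfl fun x hx => sum_congr rfl (split x hx)]
  simp only [sum_add_distrib]
  rw [sum_congr rfl fun x _ => sum_comm (s := Ioo x b) (t := Ioo a x),
    ← sum_Ioo_sum_Ioo_comm a b (fun z x => ∑ y ∈ Ioo x b, g x y z)]
  congr 1
  exact sum_congr rfl fun x _ => (sum_Ioo_sum_Ioo_comm x b fun z y => g x y z).symm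

/-- Reflecting `n ↦ a + s - n` in `(a, s)` exchanges the gaps `s - n` and `n - a`. -/
theorem sum_Ioo_sum_Ioo_mul_sub {R : Type*} [CommSemiring R] (a b : ℕ) (φ F : ℕ → R) :
    ∑ n ∈ Ioo a b, ∑ s ∈ Ioo n b, φ (s - n) * F s
      = ∑ n ∈ Ioo a b, φ (n - a) * ∑ s ∈ Ioo n b, F s := by
  simp_rw [mul_sum]
  rw [sum_Ioo_sum_Ioo_comm, sum_Ioo_sum_Ioo_comm]
  refine sum_congr rfl fun s _ => ?_
  have h := sum_Ioo_reflect (fun n => φ (n - a) * F s) (a := a) (b := s) (c := a + s) (by omega)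
  rw [Nat.add_sub_cancel, Nat.add_sub_cancel_left] at h
  rw [← h]
  refine sum_congr rfl fun n hn => ?_
  rw [mem_Ioo] at hn
  congr 2
  omega

end Finset

open Finset

theorem inv_pow_mul_inv_sub {K : Type*} [Field K] {x y : K} (hx : x ≠ 0) (hy : y ≠ 0)
    (hxy : y - x ≠ 0) (k : ℕ) :
    x⁻¹ ^ k * (y - x)⁻¹
      = ∑ i ∈ range k, y⁻¹ ^ (i + 1) * x⁻¹ ^ (k - i) + y⁻¹ ^ k * (y - x)⁻¹ := by
  induction k with
  | zero => simp
  | succ k ih =>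
    have h1 : x⁻¹ * (y - x)⁻¹ = y⁻¹ * x⁻¹ + y⁻¹ * (y - x)⁻¹ := by
      field_simp; ring
    have h2 : ∑ i ∈ range k, y⁻¹ ^ (i + 1) * x⁻¹ ^ (k + 1 - i)
        = x⁻¹ * ∑ i ∈ range k, y⁻¹ ^ (i + 1) * x⁻¹ ^ (k - i) := by
      rw [mul_sum]
      refine sum_congr rfl fun i hi => ?_
      rw [Nat.sub_add_comm (mem_range.1 hi).le, pow_succ]
      ring
    rw [sum_range_succ, h2, Nat.add_sub_cancel_left]
    linear_combination x⁻¹ * ih + y⁻¹ ^ k * h1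

section StrictSums

variable (p : ℕ)

theorem natCast_ne_zero_of_pos_of_lt {n : ℕ} (h0 : 0 < n) (hn : n < p) : (n : ZMod p) ≠ 0 := by
  rw [Ne, ZMod.natCast_eq_zero_iff]
  exact Nat.not_dvd_of_pos_of_lt h0 hn

/-- `mhs p a b [k₁, …, k_r] = ∑_{a < n₁ < ⋯ < n_r < b} n₁^{-k₁} ⋯ n_r^{-k_r}` in `ZMod p`. -/
def mhs (a b : ℕ) : List ℕ → ZMod p
  | [] => 1
  | k :: ks => ∑ n ∈ Ioo a b, ((n : ZMod p)⁻¹) ^ k * mhs n b ks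

theorem mhs_append_singleton (a b : ℕ) (ks : List ℕ) (k : ℕ) :
    mhs p a b (ks ++ [k]) = ∑ n ∈ Ioo a b, mhs p a n ks * ((n : ZMod p)⁻¹) ^ k := by
  induction ks generalizing a with
  | nil => simp [mhs]
  | cons m ks ih =>
    simp only [List.cons_append, mhs, ih, mul_sum, sum_mul]
    rw [sum_Ioo_sum_Ioo_comm]
    exact sum_congr rfl fun _ _ => sum_congr rfl fun _ _ => by ring

def singleStuffle (k : ℕ) : List ℕ → List (List ℕ)
  | [] => [[k]]
  | m :: ks => (k :: m :: ks) :: ((k + m) :: ks) :: (singleStuffle k ks).map (m :: ·)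

theorem mhs_singleton_mul (a b k : ℕ) (ks : List ℕ) :
    mhs p a b [k] * mhs p a b ks = ((singleStuffle k ks).map (mhs p a b)).sum := by
  induction ks generalizing a with
  | nil => simp [mhs, singleStuffle]
  | cons m ks ih =>
    have split : ∀ t ∈ Ioo a b, mhs p a b [k] * (((t : ZMod p)⁻¹) ^ m * mhs p t b ks)
        = ∑ n ∈ Ioo a t, ((n : ZMod p)⁻¹) ^ k * (((t : ZMod p)⁻¹) ^ m * mhs p t b ks)
          + ((t : ZMod p)⁻¹) ^ (k + m) * mhs p t b ks
          + ((t : ZMod p)⁻¹) ^ m * ((singleStuffle k ks).map (mhs p t b)).sum := by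
      intro t ht
      rw [mem_Ioo] at ht
      have h : mhs p a b [k] = ∑ n ∈ Ioo a t, ((n : ZMod p)⁻¹) ^ k + ((t : ZMod p)⁻¹) ^ k
          + mhs p t b [k] := by
        simp only [mhs, mul_one]
        exact sum_Ioo_eq_add_add _ ht.1 ht.2
      rw [h, ← ih, add_mul, add_mul, sum_mul, pow_add]
      ring
    rw [mhs.eq_2 p a b m ks, mul_sum, sum_congr rfl split, sum_add_distrib, sum_add_distrib,
      ← sum_Ioo_sum_Ioo_comm]
    simp only [singleStuffle, List.map_cons, List.sum_cons, List.map_map, Function.comp_def,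
      mhs, mul_sum, ← List.sum_map_mul_left, sum_list_sum_map_comm, add_assoc]

/-- Like `mhs p a p (0 :: ks)`, but the first variable `n` carries the gap factor `(n - a)⁻¹`. -/
def mhsGap (a : ℕ) (ks : List ℕ) : ZMod p :=
  ∑ n ∈ Ioo a p, ((n - a : ℕ) : ZMod p)⁻¹ * mhs p n p ks

theorem mhsGap_zero (ks : List ℕ) : mhsGap p 0 ks = mhs p 0 p (1 :: ks) := by
  simp [mhsGap, mhs]

def entrySplits : List ℕ → List (List ℕ)
  | [] => []
  | k :: ks => (List.range k).map (fun i => (k - i) :: (i + 1) :: ks) ++ (entrySplits ks).map (k :: ·)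

end StrictSums

section PrimeField

variable (p : ℕ) [Fact p.Prime]

theorem inv_natCast_sub_of_le {n : ℕ} (h : n ≤ p) :
    ((p - n : ℕ) : ZMod p)⁻¹ = -((n : ZMod p))⁻¹ := by
  rw [Nat.cast_sub h, ZMod.natCast_self, zero_sub, inv_neg]

theorem mhs_eq_neg_one_pow_mul_mhs_reverse {a b : ℕ} (hb : b ≤ p) (ks : List ℕ) :
    mhs p a b ks = (-1) ^ ks.sum * mhs p (p - b) (p - a) ks.reverse := by
  induction ks generalizing a with
  | nil => simp [mhs]
  | cons k ks ih =>
    rw [List.reverse_cons, mhs_append_singleton, ← sum_Ioo_reflect _ hb, mhs, mul_sum]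
    refine sum_congr rfl fun n hn => ?_
    rw [mem_Ioo] at hn
    have hsq : ((-1 : ZMod p)) ^ k * (-1) ^ k = 1 := by rw [← mul_pow]; norm_num
    rw [ih, inv_natCast_sub_of_le p (by omega), List.sum_cons, neg_pow, pow_add]
    linear_combination (-(((n : ZMod p)⁻¹) ^ k * mhs p (p - b) (p - n) ks.reverse
      * (-1) ^ ks.sum)) * hsq

theorem mhs_add_mhs_reverse_of_odd {ks : List ℕ} (h : Odd ks.sum) :
    mhs p 0 p ks + mhs p 0 p ks.reverse = 0 := by
  rw [mhs_eq_neg_one_pow_mul_mhs_reverse p le_rfl, Nat.sub_self, Nat.sub_zero, h.neg_one_pow]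
  ring

theorem mhs_singleton_eq_zero {k : ℕ} (hk0 : 0 < k) (hk : k < p - 1) : mhs p 0 p [k] = 0 := by
  have h : ∑ n ∈ Ioo 0 p, ((n : ZMod p)⁻¹) ^ k = ∑ x : ZMod p, x⁻¹ ^ k := by
    rw [← sum_erase univ (a := 0) (by simp [zero_pow hk0.ne'])]
    refine sum_nbij' (fun n => (n : ZMod p)) ZMod.val ?_ ?_ ?_ ?_ fun _ _ => rfl
    · intro n hn
      rw [mem_Ioo] at hn
      simp [natCast_ne_zero_of_pos_of_lt p hn.1 hn.2]
    · intro x hx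
      rw [mem_erase] at hx
      simp [Nat.pos_of_ne_zero ((ZMod.val_ne_zero x).2 hx.1), ZMod.val_lt x]
    · intro n hn
      exact ZMod.val_cast_of_lt (mem_Ioo.1 hn).2
    · intro x _
      exact ZMod.natCast_zmod_val x
  simp only [mhs, mul_one]
  rw [h]
  exact (Equiv.sum_comp (Equiv.inv (ZMod p)) (· ^ k)).trans
    (FiniteField.sum_pow_lt_card_sub_one _ k (by rwa [ZMod.card]))

theorem sum_singleStuffle_eq_zero {k : ℕ} (hk0 : 0 < k) (hk : k < p - 1) (ks : List ℕ) :
    ((singleStuffle k ks).map (mhs p 0 p)).sum = 0 := by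
  rw [← mhs_singleton_mul, mhs_singleton_eq_zero p hk0 hk, zero_mul]

theorem mhs_singleton_one_eq_neg_mhsGap (a : ℕ) : mhs p a p [1] = -mhsGap p a [] := by
  simp only [mhs, mhsGap, mul_one, pow_one, ← sum_neg_distrib]
  have h := sum_Ioo_reflect (fun n => ((n : ZMod p))⁻¹) (a := a) (b := p) (c := a + p) (by omega)
  rw [Nat.add_sub_cancel, Nat.add_sub_cancel_left] at h
  rw [← h]
  refine sum_congr rfl fun n hn => ?_
  rw [mem_Ioo] at hn
  rw [show a + p - n = p - (n - a) by omega, inv_natCast_sub_of_le p (by omega)]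

theorem inv_pow_mul_inv_natCast_sub {n s : ℕ} (hn : 0 < n) (hns : n < s) (hs : s < p) (k : ℕ) :
    ((n : ZMod p)⁻¹) ^ k * ((s - n : ℕ) : ZMod p)⁻¹
      = ∑ i ∈ range k, ((s : ZMod p)⁻¹) ^ (i + 1) * ((n : ZMod p)⁻¹) ^ (k - i)
        + ((s : ZMod p)⁻¹) ^ k * ((s - n : ℕ) : ZMod p)⁻¹ := by
  have hsn := natCast_ne_zero_of_pos_of_lt p (Nat.sub_pos_of_lt hns) (by omega)
  rw [Nat.cast_sub hns.le] at hsn ⊢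
  exact inv_pow_mul_inv_sub (natCast_ne_zero_of_pos_of_lt p hn (by omega))
    (natCast_ne_zero_of_pos_of_lt p (by omega) hs) hsn k

theorem sum_inv_pow_mul_mhsGap (a k : ℕ) (ks : List ℕ) :
    ∑ n ∈ Ioo a p, ((n : ZMod p)⁻¹) ^ k * mhsGap p n ks
      = ((List.range k).map fun i => mhs p a p ((k - i) :: (i + 1) :: ks)).sum
        + mhsGap p a (k :: ks) := by
  have expand : ∀ n ∈ Ioo a p, ((n : ZMod p)⁻¹) ^ k * mhsGap p n ks
      = ∑ i ∈ range k, ((n : ZMod p)⁻¹) ^ (k - i)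
          * ∑ s ∈ Ioo n p, ((s : ZMod p)⁻¹) ^ (i + 1) * mhs p s p ks
        + ∑ s ∈ Ioo n p, ((s - n : ℕ) : ZMod p)⁻¹ * (((s : ZMod p)⁻¹) ^ k * mhs p s p ks) := by
    intro n hn
    rw [mem_Ioo] at hn
    simp_rw [mhsGap, mul_sum]
    rw [sum_comm, ← sum_add_distrib]
    refine sum_congr rfl fun s hs => ?_
    rw [mem_Ioo] at hs
    rw [← mul_assoc, inv_pow_mul_inv_natCast_sub p (by omega) hs.1 hs.2, add_mul, sum_mul]
    congr 1
    · exact sum_congr rfl fun _ _ => by ring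
    · ring
  rw [sum_congr rfl expand, sum_add_distrib, sum_comm,
    sum_Ioo_sum_Ioo_mul_sub a p (fun m => ((m : ZMod p))⁻¹), sum_eq_multiset_sum]
  rfl

theorem mhs_append_one_add_entrySplits_add_mhsGap (a : ℕ) (ks : List ℕ) :
    mhs p a p (ks ++ [1]) + ((entrySplits ks).map (mhs p a p)).sum + mhsGap p a ks = 0 := by
  induction ks generalizing a with
  | nil => simp [entrySplits, mhs_singleton_one_eq_neg_mhsGap]
  | cons k ks ih =>
    have h : mhs p a p (k :: (ks ++ [1])) = ∑ n ∈ Ioo a p, ((n : ZMod p)⁻¹) ^ k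
        * -(((entrySplits ks).map (mhs p n p)).sum + mhsGap p n ks) := by
      rw [mhs]
      exact sum_congr rfl fun n _ => by linear_combination ((n : ZMod p)⁻¹) ^ k * ih n
    rw [List.cons_append, h]
    simp only [entrySplits, List.map_append, List.map_map, List.sum_append, mul_neg, mul_add,
      sum_neg_distrib, sum_add_distrib, sum_inv_pow_mul_mhsGap, ← List.sum_map_mul_left,
      sum_list_sum_map_comm, Function.comp_def, mhs]
    ring

theorem mhs_append_one_add_entrySplits_add_mhs_one_cons (ks : List ℕ) :
    mhs p 0 p (ks ++ [1]) + ((entrySplits ks).map (mhs p 0 p)).sum + mhs p 0 p (1 :: ks) = 0 := by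
  rw [← mhsGap_zero]
  exact mhs_append_one_add_entrySplits_add_mhsGap p 0 ks

end PrimeField

section Decomposition

variable (p : ℕ)

theorem Hcyc2_eq_mhs (a b c : ℕ) :
    Hcyc2 p a b c = mhs p 0 p [a + c, b] + mhs p 0 p [a, c, b] + mhs p 0 p [a, b + c] := by
  simp only [Hcyc2, mhs, mul_one, mul_sum]
  rw [← sum_add_distrib, ← sum_add_distrib]
  refine sum_congr rfl fun n₁ _ => ?_
  rw [sum_Ioo_sum_Ioo_comm n₁ p, ← sum_add_distrib, ← sum_add_distrib]
  refine sum_congr rfl fun n₂ hn₂ => ?_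
  rw [sum_Icc_eq_add_add _ (mem_Ioo.1 hn₂).1]
  ring_nf

theorem Hcyc3_eq_mhs (k₁ k₂ k₃ c : ℕ) :
    Hcyc3 p k₁ k₂ k₃ c = mhs p 0 p [k₁ + c, k₂, k₃] + mhs p 0 p [k₁, k₂ + c, k₃]
      + mhs p 0 p [k₁, k₂, k₃ + c] + mhs p 0 p [k₁, c, k₂, k₃] + mhs p 0 p [k₁, k₂, c, k₃] := by
  simp only [Hcyc3, mhs, mul_one, mul_sum]
  rw [← sum_add_distrib, ← sum_add_distrib, ← sum_add_distrib, ← sum_add_distrib]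
  refine sum_congr rfl fun n₁ _ => ?_
  rw [sum_Ioo_sum_Ioo_sum_Icc]
  simp only [sum_add_distrib]
  iterate 4 congr 1
  all_goals
    repeat' refine sum_congr rfl fun _ _ => ?_
    ring

end Decomposition

theorem mhs_weight_seven_relation (p : ℕ) [Fact p.Prime] (hp : 4 < p) :
    4 * mhs p 0 p [4, 3] + 2 * mhs p 0 p [3, 4] + 4 * mhs p 0 p [1, 6] + 2 * mhs p 0 p [2, 5]
      + 3 * mhs p 0 p [1, 3, 3] + mhs p 0 p [1, 2, 4] + 2 * mhs p 0 p [2, 2, 3]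
      + mhs p 0 p [3, 1, 3] + mhs p 0 p [1, 1, 5] - mhs p 0 p [3, 2, 2] - mhs p 0 p [1, 4, 2]
      + mhs p 0 p [1, 2, 1, 3] + mhs p 0 p [1, 1, 2, 3] - 2 * mhs p 0 p [1, 2, 2, 2] = 0 := by
  have s₁ := sum_singleStuffle_eq_zero p (k := 1) (by omega) (by omega) [3, 2, 1]
  have s₂ := sum_singleStuffle_eq_zero p (k := 1) (by omega) (by omega) [5, 1]
  have s₃ := sum_singleStuffle_eq_zero p (k := 2) (by omega) (by omega) [2, 2, 1]
  have s₄ := sum_singleStuffle_eq_zero p (k := 2) (by omega) (by omega) [3, 1, 1]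
  have s₅ := sum_singleStuffle_eq_zero p (k := 3) (by omega) (by omega) [3, 1]
  have h₁ := mhs_append_one_add_entrySplits_add_mhs_one_cons p [2, 3, 1]
  have h₂ := mhs_append_one_add_entrySplits_add_mhs_one_cons p [3, 1, 2]
  simp only [singleStuffle, entrySplits, List.range_succ, List.range_zero, List.map_cons,
    List.map_nil, List.sum_cons, List.sum_nil, List.nil_append, List.cons_append, Nat.reduceAdd,
    Nat.reduceSub, add_zero] at s₁ s₂ s₃ s₄ s₅ h₁ h₂
  have rev (ks ks' : List ℕ) (h : ks.reverse = ks') (hw : ks.sum = 7) :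
      mhs p 0 p ks + mhs p 0 p ks' = 0 :=
    h ▸ mhs_add_mhs_reverse_of_odd p (by rw [hw]; decide)
  linear_combination 4 * rev [4, 3] [3, 4] rfl rfl + 2 * rev [5, 2] [2, 5] rfl rfl
    + 4 * rev [6, 1] [1, 6] rfl rfl + rev [3, 2, 2] [2, 2, 3] rfl rfl
    + 3 * rev [3, 3, 1] [1, 3, 3] rfl rfl + rev [4, 2, 1] [1, 2, 4] rfl rfl
    + rev [5, 1, 1] [1, 1, 5] rfl rfl - rev [2, 4, 1] [1, 4, 2] rfl rfl
    + rev [1, 5, 1] [1, 5, 1] rfl rfl + 2 * rev [1, 3, 2, 1] [1, 2, 3, 1] rfl rfl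
    + 2 * rev [2, 1, 3, 1] [1, 3, 1, 2] rfl rfl - 2 * rev [2, 2, 2, 1] [1, 2, 2, 2] rfl rfl
    + rev [3, 1, 2, 1] [1, 2, 1, 3] rfl rfl + rev [3, 2, 1, 1] [1, 1, 2, 3] rfl rfl
    - 2 * s₁ - 2 * s₂ + s₃ + 3 * s₄ - 2 * s₅ - h₁ - h₂

theorem cyclic_example_congruence :
    ∃ N : ℕ, ∀ p : ℕ, p.Prime → N < p →
      2 * Hcyc2 p 1 3 3 + 2 * Hcyc2 p 1 4 2 + 2 * Hcyc2 p 2 3 2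
        + Hcyc3 p 1 1 3 2 - Hcyc3 p 1 2 2 2 = 0 := by
  refine ⟨4, fun p hp hp4 => ?_⟩
  have := Fact.mk hp
  simp only [Hcyc2_eq_mhs, Hcyc3_eq_mhs, Nat.reduceAdd]
  linear_combination mhs_weight_seven_relation p hp4
end
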